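/- Let h ≠ 0 and θ ∈ ℝ. The projected geodesic-spiral g'(t) = ({a(t)}, {b(t)}, {c(t) − ⌊a(t)⌋ b(t)}) is periodic (i.e., there exists T > 0 such that g'(t + T) = g'(t) for all t ∈ ℝ) if and only if h²/π is rational. -/
import Mathlib

open Real

/-- Coordinate `a` of the geodesic-spiral in the Heisenberg group. -/
noncomputable def aSpiral (h θ t : ℝ) : ℝ := (Real.sin (θ + h * t) - Real.sin θ) / h

/-- Coordinate `b` of the geodesic-spiral in the Heisenberg group. -/
noncomputable def bSpiral (h θ t : ℝ) : ℝ := (Real.cos θ - Real.cos (θ + h * t)) / h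

/-- Coordinate `c` of the geodesic-spiral in the Heisenberg group. -/
noncomputable def cSpiral (h θ t : ℝ) : ℝ :=
  (h * t - Real.sin (h * t)) / (2 * h ^ 2) + aSpiral h θ t * bSpiral h θ t / 2

/-- The projected geodesic-spiral on the Heisenberg nil-manifold. -/
noncomputable def spiralProj (h θ t : ℝ) : ℝ × ℝ × ℝ :=
  (Int.fract (aSpiral h θ t), Int.fract (bSpiral h θ t),
    Int.fract (cSpiral h θ t - (⌊aSpiral h θ t⌋ : ℝ) * bSpiral h θ t))

lemma argShift (h θ t : ℝ) (hh : h ≠ 0) (k : ℤ) :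
    θ + h * (t + 2 * π * k / h) = (θ + h * t) + k * (2 * π) := by
  field_simp; ring

lemma aSpiral_shift (h θ t : ℝ) (hh : h ≠ 0) (k : ℤ) :
    aSpiral h θ (t + 2 * π * k / h) = aSpiral h θ t := by
  unfold aSpiral
  rw [argShift h θ t hh k, Real.sin_add_int_mul_two_pi]

lemma bSpiral_shift (h θ t : ℝ) (hh : h ≠ 0) (k : ℤ) :
    bSpiral h θ (t + 2 * π * k / h) = bSpiral h θ t := by
  unfold bSpiral
  rw [argShift h θ t hh k, Real.cos_add_int_mul_two_pi]

lemma cSpiral_shift (h θ t : ℝ) (hh : h ≠ 0) (k : ℤ) :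
    cSpiral h θ (t + 2 * π * k / h) = cSpiral h θ t + π * k / h ^ 2 := by
  unfold cSpiral
  rw [aSpiral_shift h θ t hh k, bSpiral_shift h θ t hh k]
  have harg : h * (t + 2 * π * k / h) = h * t + (k : ℝ) * (2 * π) := by
    field_simp
  rw [harg, Real.sin_add_int_mul_two_pi]
  field_simp
  ring

lemma aSpiral_zero (h θ : ℝ) : aSpiral h θ 0 = 0 := by simp [aSpiral]

lemma bSpiral_zero (h θ : ℝ) : bSpiral h θ 0 = 0 := by simp [bSpiral]

lemma cSpiral_zero (h θ : ℝ) : cSpiral h θ 0 = 0 := by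
  simp [cSpiral, aSpiral_zero, bSpiral_zero]

theorem stmt5 (h θ : ℝ) (hh : h ≠ 0) :
    (∃ T : ℝ, 0 < T ∧ ∀ t : ℝ, spiralProj h θ (t + T) = spiralProj h θ t) ↔
      ∃ q : ℚ, h ^ 2 / Real.pi = (q : ℝ) := by
  constructor
  · rintro ⟨T, hTpos, hper⟩
    -- Step 1: sin (h*T/2) = 0
    have hsin : Real.sin (h * T / 2) = 0 := by
      by_contra hs
      set s : ℝ := 2 / h * Real.sin (h * T / 2) with hs_def
      have hs0 : s ≠ 0 := by
        apply mul_ne_zero _ hs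
        simp [hh]
      set v : ℝ := 1 / (1 + |s|) with hv_def
      have habs : 0 < |s| := abs_pos.mpr hs0
      have hvpos : 0 < v := by positivity
      have hvle : v ≤ 1 := by
        rw [hv_def, div_le_one (by positivity)]
        linarith
      set t : ℝ := (Real.arccos v - θ - h * T / 2) / h with ht_def
      have hcos : Real.cos (θ + h * t + h * T / 2) = v := by
        have : θ + h * t + h * T / 2 = Real.arccos v := by
          rw [ht_def]; field_simp; ring
        rw [this]
        exact Real.cos_arccos (by linarith) hvle
      have hdiff : aSpiral h θ (t + T) - aSpiral h θ t = s * v := by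
        have e1 : Real.sin (θ + h * (t + T)) - Real.sin (θ + h * t)
            = 2 * Real.sin (h * T / 2) * Real.cos (θ + h * t + h * T / 2) := by
          rw [Real.sin_sub_sin]
          ring_nf
        have : aSpiral h θ (t + T) - aSpiral h θ t
            = (Real.sin (θ + h * (t + T)) - Real.sin (θ + h * t)) / h := by
          unfold aSpiral; ring
        rw [this, e1, hcos, hs_def]
        ring
      have h1 := hper t
      simp only [spiralProj, Prod.mk.injEq] at h1
      obtain ⟨z, hz⟩ := Int.fract_eq_fract.mp h1.1
      rw [hdiff] at hz
      have hzabs : |(z : ℝ)| < 1 := by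
        rw [← hz, abs_mul, abs_of_pos hvpos, hv_def]
        rw [mul_one_div, div_lt_one (by positivity)]
        linarith
      have hz0 : z = 0 := by
        have h1 : |z| < 1 := by exact_mod_cast (by push_cast; exact hzabs : ((|z| : ℤ) : ℝ) < 1)
        have := abs_lt.mp h1
        omega
      rw [hz0] at hz
      have hne : s * v ≠ 0 := mul_ne_zero hs0 (ne_of_gt hvpos)
      push_cast at hz
      exact hne hz
    -- Step 2: h*T = 2*π*k
    obtain ⟨k, hk⟩ := Real.sin_eq_zero_iff.mp hsin
    have hk0 : k ≠ 0 := by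
      rintro rfl
      simp at hk
      have : h * T ≠ 0 := mul_ne_zero hh (ne_of_gt hTpos)
      exact this (by linarith)
    have hT_eq : T = 0 + 2 * π * k / h := by
      field_simp
      linarith [hk]
    -- Step 3: evaluate at t = 0
    have h0 := hper 0
    rw [zero_add, hT_eq] at h0
    simp only [spiralProj, Prod.mk.injEq] at h0
    obtain ⟨z, hz⟩ := Int.fract_eq_fract.mp h0.2.2
    rw [cSpiral_shift h θ 0 hh k, aSpiral_shift h θ 0 hh k, bSpiral_shift h θ 0 hh k,
      aSpiral_zero, bSpiral_zero, cSpiral_zero] at hz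
    have hkR : (k : ℝ) ≠ 0 := Int.cast_ne_zero.mpr hk0
    have h2ne : h ^ 2 ≠ 0 := pow_ne_zero 2 hh
    have hz' : π * (k : ℝ) / h ^ 2 = (z : ℝ) := by
      rw [← hz]; ring
    have hz0 : z ≠ 0 := by
      rintro rfl
      rw [Int.cast_zero, div_eq_zero_iff] at hz'
      rcases hz' with hz' | hz'
      · exact mul_ne_zero Real.pi_ne_zero hkR hz'
      · exact h2ne hz'
    refine ⟨(k : ℚ) / (z : ℚ), ?_⟩
    have hzR : (z : ℝ) ≠ 0 := Int.cast_ne_zero.mpr hz0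
    push_cast
    rw [div_eq_div_iff Real.pi_ne_zero hzR]
    have h2 : h ^ 2 ≠ 0 := pow_ne_zero 2 hh
    field_simp at hz'
    linarith [hz']
  · rintro ⟨q, hq⟩
    have hpi := Real.pi_pos
    have hsq : (0:ℝ) < h ^ 2 := by positivity
    have hqpos : (0:ℚ) < q := by
      have : (0:ℝ) < (q:ℝ) := by rw [← hq]; positivity
      exact_mod_cast this
    have hh2 : h ^ 2 = (q : ℝ) * π := by
      field_simp at hq; linarith [hq]
    have hnum : (q.num : ℝ) = (q : ℝ) * (q.den : ℝ) := by
      have h2 : (q.num : ℚ) = q * q.den := (Rat.mul_den_eq_num q).symm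
      exact_mod_cast h2
    set k : ℤ := if 0 < h then q.num else -q.num with hk_def
    set m : ℤ := if 0 < h then (q.den : ℤ) else -(q.den : ℤ) with hm_def
    have hkm : π * (k : ℝ) / h ^ 2 = (m : ℝ) := by
      rw [hh2]
      have hqR : (q : ℝ) ≠ 0 := by positivity
      rw [hk_def, hm_def]
      split_ifs <;>
      · push_cast
        rw [hnum]
        field_simp
    have hnumpos : 0 < q.num := Rat.num_pos.mpr hqpos
    refine ⟨2 * π * (k : ℝ) / h, ?_, ?_⟩
    · rw [hk_def]
      rcases lt_or_gt_of_ne hh with hneg | hpos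
      · simp only [if_neg (not_lt.mpr hneg.le)]
        push_cast
        apply div_pos_of_neg_of_neg _ hneg
        have : (0:ℝ) < (q.num : ℝ) := by exact_mod_cast hnumpos
        nlinarith
      · simp only [if_pos hpos]
        have : (0:ℝ) < (q.num : ℝ) := by exact_mod_cast hnumpos
        positivity
    · intro t
      simp only [spiralProj, Prod.mk.injEq]
      rw [aSpiral_shift h θ t hh k, bSpiral_shift h θ t hh k, cSpiral_shift h θ t hh k]
      refine ⟨rfl, rfl, ?_⟩
      rw [show cSpiral h θ t + π * k / h ^ 2 - (⌊aSpiral h θ t⌋ : ℝ) * bSpiral h θ t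
          = (cSpiral h θ t - (⌊aSpiral h θ t⌋ : ℝ) * bSpiral h θ t) + (m : ℝ) by
        rw [← hkm]; ring]
      exact Int.fract_add_intCast _ m
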